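/- arXiv:2404.09719 — 5 statements merged into one kernel-verified Lean document; each statement's English description precedes it below -/
import Mathlib

section
/- Let 0 < a₁ < a₂ and, for integers n ≥ 1, define Δ_n = ((a₂²−a₁²)/(2a₂²) + 1/(2π a₂²) − 1/(2π a₁²) − 1/n)² − (1/n²)(a₁/a₂)^{2n} and Ω_n^± = ((a₂²−a₁²)/(4a₂²) + 1/(4π a₂²) + 1/(4π a₁²)) ± (1/2)√Δ_n. Then the set of all such values Ω_n^± (taken over all 0 < a₁ < a₂ and all n ≥ 1 with Δ_n > 0) is dense in the interval (0, ∞): for every c > 0 and every ε > 0, there exist 0 < a₁ < a₂ and an integer n ≥ 1 with Δ_n > 0 such that |Ω_n^+ − c| < ε or |Ω_n^− − c| < ε. -/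
/-!
Write `P = (a₂²-a₁²)/(2a₂²) + 1/(2π a₂²)` (`Ωouter`) and `Q = 1/(2π a₁²)` (`Ωinner`), so that
`Δ_n = (P - Q - 1/n)² - (1/n²)(a₁/a₂)^{2n}` and `Ω_n^± = (P + Q)/2 ± √Δ_n / 2`.
For `|a₁| ≤ |a₂|` the last term of `Δ_n` is at most `1/n²`, so `Δ_n → (P - Q)²`, hence
`Ω_n^+ → max P Q` and `Ω_n^- → min P Q`, and `Δ_n > 0` for large `n` as soon as `P ≠ Q`.
Now `Q` takes every positive value `c'`, and for `a₂ = 2a₁` one gets `P = 3/8 + Q/4`, which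
differs from `Q` unless `c' = 1/2`. So every `c' ∈ (0, ∞) \ {1/2}` is a limit of values `Ω_n^±`.
-/

open Real Filter

noncomputable section

/-- The discriminant
`Δ_n = ((a₂²-a₁²)/(2a₂²) + 1/(2π a₂²) - 1/(2π a₁²) - 1/n)² - (1/n²)(a₁/a₂)^{2n}`. -/
def Δn (a₁ a₂ : ℝ) (n : ℕ) : ℝ :=
  ((a₂ ^ 2 - a₁ ^ 2) / (2 * a₂ ^ 2) + 1 / (2 * π * a₂ ^ 2)
      - 1 / (2 * π * a₁ ^ 2) - 1 / (n : ℝ)) ^ 2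
    - (1 / (n : ℝ) ^ 2) * (a₁ / a₂) ^ (2 * n)

/-- The midpoint `(a₂²-a₁²)/(4a₂²) + 1/(4π a₂²) + 1/(4π a₁²)` of the two roots. -/
def Ωmid (a₁ a₂ : ℝ) : ℝ :=
  (a₂ ^ 2 - a₁ ^ 2) / (4 * a₂ ^ 2) + 1 / (4 * π * a₂ ^ 2) + 1 / (4 * π * a₁ ^ 2)

/-- The angular velocity `Ω_n^+ = Ωmid + (1/2)√Δ_n`. -/
def Ωplus (a₁ a₂ : ℝ) (n : ℕ) : ℝ := Ωmid a₁ a₂ + (1 / 2) * Real.sqrt (Δn a₁ a₂ n)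

/-- The angular velocity `Ω_n^- = Ωmid - (1/2)√Δ_n`. -/
def Ωminus (a₁ a₂ : ℝ) (n : ℕ) : ℝ := Ωmid a₁ a₂ - (1 / 2) * Real.sqrt (Δn a₁ a₂ n)

open Topology

def Ωouter (a₁ a₂ : ℝ) : ℝ := (a₂ ^ 2 - a₁ ^ 2) / (2 * a₂ ^ 2) + 1 / (2 * π * a₂ ^ 2)

def Ωinner (a₁ : ℝ) : ℝ := 1 / (2 * π * a₁ ^ 2)

lemma Δn_eq (a₁ a₂ : ℝ) (n : ℕ) :
    Δn a₁ a₂ n = (Ωouter a₁ a₂ - Ωinner a₁ - 1 / (n : ℝ)) ^ 2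
      - (1 / (n : ℝ) ^ 2) * ((a₁ / a₂) ^ 2) ^ n := by
  rw [← pow_mul]; rfl

lemma Ωmid_eq (a₁ a₂ : ℝ) : Ωmid a₁ a₂ = (Ωouter a₁ a₂ + Ωinner a₁) / 2 := by
  unfold Ωmid Ωouter Ωinner; ring

lemma exists_Ωinner_eq {c : ℝ} (hc : 0 < c) : ∃ a > 0, Ωinner a = c := by
  have hpos : 0 < 1 / (2 * π * c) := by positivity
  refine ⟨√(1 / (2 * π * c)), Real.sqrt_pos.2 hpos, ?_⟩
  rw [Ωinner, Real.sq_sqrt hpos.le]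
  field_simp

lemma Ωouter_two_mul {a : ℝ} (ha : a ≠ 0) : Ωouter a (2 * a) = 3 / 8 + Ωinner a / 4 := by
  unfold Ωouter Ωinner
  field_simp
  ring

lemma tendsto_Δn {a₁ a₂ : ℝ} (h : |a₁| ≤ |a₂|) :
    Tendsto (Δn a₁ a₂) atTop (𝓝 ((Ωouter a₁ a₂ - Ωinner a₁) ^ 2)) := by
  have hinv : Tendsto (fun n : ℕ => 1 / (n : ℝ)) atTop (𝓝 0) :=
    tendsto_one_div_atTop_nhds_zero_nat
  have hr : (a₁ / a₂) ^ 2 ∈ Set.Icc (0 : ℝ) 1 := by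
    refine ⟨sq_nonneg _, ?_⟩
    rw [sq_le_one_iff_abs_le_one, abs_div]
    exact div_le_one_of_le₀ h (abs_nonneg _)
  have hcorr : Tendsto (fun n : ℕ => (1 / (n : ℝ) ^ 2) * ((a₁ / a₂) ^ 2) ^ n) atTop (𝓝 0) := by
    refine squeeze_zero (g := fun n : ℕ => 1 / (n : ℝ) ^ 2)
      (fun n => mul_nonneg (by positivity) (pow_nonneg hr.1 n))
      (fun n => mul_le_of_le_one_right (by positivity) (pow_le_one₀ hr.1 hr.2)) ?_
    simpa using hinv.pow 2
  have := ((tendsto_const_nhds (x := Ωouter a₁ a₂ - Ωinner a₁)).sub hinv).pow 2 |>.sub hcorr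
  rw [sub_zero, sub_zero] at this
  exact this.congr fun n => (Δn_eq a₁ a₂ n).symm

lemma tendsto_sqrt_Δn {a₁ a₂ : ℝ} (h : |a₁| ≤ |a₂|) :
    Tendsto (fun n => √(Δn a₁ a₂ n)) atTop (𝓝 |Ωouter a₁ a₂ - Ωinner a₁|) := by
  simpa only [Real.sqrt_sq_eq_abs] using (tendsto_Δn h).sqrt

lemma tendsto_Ωplus {a₁ a₂ : ℝ} (h : |a₁| ≤ |a₂|) :
    Tendsto (Ωplus a₁ a₂) atTop (𝓝 (max (Ωouter a₁ a₂) (Ωinner a₁))) := by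
  have hmax := sup_eq_half_smul_add_add_abs_sub' ℝ (Ωouter a₁ a₂) (Ωinner a₁)
  rw [smul_eq_mul, abs_sub_comm] at hmax
  rw [hmax, show 2⁻¹ * (Ωouter a₁ a₂ + Ωinner a₁ + |Ωouter a₁ a₂ - Ωinner a₁|)
    = Ωmid a₁ a₂ + 1 / 2 * |Ωouter a₁ a₂ - Ωinner a₁| by rw [Ωmid_eq]; ring]
  exact tendsto_const_nhds.add ((tendsto_sqrt_Δn h).const_mul _)

lemma tendsto_Ωminus {a₁ a₂ : ℝ} (h : |a₁| ≤ |a₂|) :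
    Tendsto (Ωminus a₁ a₂) atTop (𝓝 (min (Ωouter a₁ a₂) (Ωinner a₁))) := by
  have hmin := inf_eq_half_smul_add_sub_abs_sub' ℝ (Ωouter a₁ a₂) (Ωinner a₁)
  rw [smul_eq_mul, abs_sub_comm] at hmin
  rw [hmin, show 2⁻¹ * (Ωouter a₁ a₂ + Ωinner a₁ - |Ωouter a₁ a₂ - Ωinner a₁|)
    = Ωmid a₁ a₂ - 1 / 2 * |Ωouter a₁ a₂ - Ωinner a₁| by rw [Ωmid_eq]; ring]
  exact tendsto_const_nhds.sub ((tendsto_sqrt_Δn h).const_mul _)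

lemma exists_Δn_pos_near_Ωinner {a₁ a₂ c ε : ℝ} (h : |a₁| ≤ |a₂|)
    (hne : Ωouter a₁ a₂ ≠ Ωinner a₁) (hc : |Ωinner a₁ - c| < ε) :
    ∃ n : ℕ, 1 ≤ n ∧ 0 < Δn a₁ a₂ n ∧
      (|Ωplus a₁ a₂ n - c| < ε ∨ |Ωminus a₁ a₂ n - c| < ε) := by
  have hpos : ∀ᶠ n in atTop, 0 < Δn a₁ a₂ n :=
    (tendsto_Δn h).eventually_const_lt (sq_pos_of_ne_zero (sub_ne_zero.2 hne))
  have hnear : ∀ᶠ n in atTop, |Ωplus a₁ a₂ n - c| < ε ∨ |Ωminus a₁ a₂ n - c| < ε := by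
    rcases hne.lt_or_gt with hlt | hgt
    · have hlim := (tendsto_Ωplus h).sub_const c |>.abs
      rw [max_eq_right hlt.le] at hlim
      exact (hlim.eventually_lt_const hc).mono fun _ => Or.inl
    · have hlim := (tendsto_Ωminus h).sub_const c |>.abs
      rw [min_eq_right hgt.le] at hlim
      exact (hlim.eventually_lt_const hc).mono fun _ => Or.inr
  exact ((eventually_ge_atTop 1).and (hpos.and hnear)).exists

/-- **Theorem (density of the bifurcating angular velocities).** The set of values
`Ω_n^±`, over all `0 < a₁ < a₂` and all `n ≥ 1` with `Δ_n > 0`, is dense in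
`(0, ∞)`. -/
theorem bifurcation_angular_velocities_dense :
    ∀ c : ℝ, 0 < c → ∀ ε : ℝ, 0 < ε →
      ∃ (a₁ a₂ : ℝ) (n : ℕ), 0 < a₁ ∧ a₁ < a₂ ∧ 1 ≤ n ∧ 0 < Δn a₁ a₂ n ∧
        (|Ωplus a₁ a₂ n - c| < ε ∨ |Ωminus a₁ a₂ n - c| < ε) := by
  intro c hc ε hε
  obtain ⟨c', hc'pos, hc'ne, hc'c⟩ : ∃ c', 0 < c' ∧ c' ≠ 1 / 2 ∧ |c' - c| < ε := by
    by_cases hc2 : c = 1 / 2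
    · refine ⟨c + ε / 2, by positivity, by rw [hc2]; linarith, ?_⟩
      rw [add_sub_cancel_left, abs_of_pos (half_pos hε)]
      exact half_lt_self hε
    · exact ⟨c, hc, hc2, by simpa using hε⟩
  obtain ⟨a, ha, hac'⟩ := exists_Ωinner_eq hc'pos
  have hne : Ωouter a (2 * a) ≠ Ωinner a := by
    rw [Ωouter_two_mul ha.ne', hac']
    contrapose! hc'ne
    linarith
  have hle : |a| ≤ |2 * a| := by rw [abs_mul, abs_two]; linarith [abs_nonneg a]
  obtain ⟨n, hn⟩ := exists_Δn_pos_near_Ωinner hle hne (by rwa [hac'])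
  exact ⟨a, 2 * a, n, ha, by linarith, hn⟩
end
end

section
/- Let 0 < a₁ < a₂ and a > 0. Then the function θ ↦ ∫₀^{2π} ∫_{a₁}^{a₂} ln|a e^{iθ} − ρ e^{iη}| ρ dρ dη is constant on ℝ: its value at every θ equals its value at θ = 0. Consequently, the trivial deformation (r₁, r₂, x₁¹) = (0,0,0) is a solution of the contour system for every angular velocity Ω ∈ ℝ. -/
open Real Complex

/-! The kernel `log ‖a e^{iθ} - ρ e^{iη}‖` depends on the angles only through `e^{i(η - θ)}`:
factoring out the unimodular `e^{iθ}` leaves `‖a - ρ e^{i(η - θ)}‖`. Hence the double integral is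
the integral over a full period of a `2π`-periodic function of `η - θ`, which does not depend on
the shift `θ`. -/

theorem Function.Periodic.intervalIntegral_comp_sub_right {E : Type*} [NormedAddCommGroup E]
    [NormedSpace ℝ E] {f : ℝ → E} {T : ℝ} (hf : Function.Periodic f T) (θ : ℝ) :
    ∫ x in (0:ℝ)..T, f (x - θ) = ∫ x in (0:ℝ)..T, f x := by
  rw [intervalIntegral.integral_comp_sub_right, zero_sub, sub_eq_neg_add,
    hf.intervalIntegral_add_eq (-θ) 0, zero_add]

theorem intervalIntegral_comp_exp_sub_mul_I {E : Type*} [NormedAddCommGroup E]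
    [NormedSpace ℝ E] (f : ℂ → E) (θ : ℝ) :
    ∫ η in (0:ℝ)..(2 * π), f (exp (↑(η - θ) * I)) = ∫ η in (0:ℝ)..(2 * π), f (exp (η * I)) := by
  have hper : Function.Periodic (fun u : ℝ => f (exp (u * I))) (2 * π) := fun u => by
    simp only [ofReal_add, ofReal_mul, ofReal_ofNat, add_mul, Complex.exp_add, exp_two_pi_mul_I,
      mul_one]
  exact hper.intervalIntegral_comp_sub_right θ

theorem norm_mul_exp_sub_mul_exp (z w : ℂ) (θ η : ℝ) :
    ‖z * exp (θ * I) - w * exp (η * I)‖ = ‖z - w * exp (↑(η - θ) * I)‖ := by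
  have hfactor :
      z * exp (θ * I) - w * exp (η * I) = exp (θ * I) * (z - w * exp (↑(η - θ) * I)) := by
    rw [mul_sub, ← mul_assoc, mul_comm _ w, mul_assoc, ← Complex.exp_add]
    push_cast; ring_nf
  rw [hfactor, norm_mul, norm_exp_ofReal_mul_I, one_mul]

theorem trivial_deformation_is_solution_general
    (a₁ a₂ a : ℝ) :
    (∀ θ : ℝ,
      (∫ η in (0:ℝ)..(2 * π), ∫ ρ in a₁..a₂,
          Real.log (‖(a : ℂ) * Complex.exp (θ * Complex.I)
            - (ρ : ℂ) * Complex.exp (η * Complex.I)‖) * ρ)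
        = ∫ η in (0:ℝ)..(2 * π), ∫ ρ in a₁..a₂,
          Real.log (‖(a : ℂ) * Complex.exp ((0 : ℝ) * Complex.I)
            - (ρ : ℂ) * Complex.exp (η * Complex.I)‖) * ρ) ∧
    (∫ η in (0:ℝ)..(2 * π), ∫ ρ in a₁..a₂, ρ * Real.cos η) = 0 := by
  refine ⟨fun θ => ?_, ?_⟩
  · simp only [norm_mul_exp_sub_mul_exp, sub_zero]
    exact intervalIntegral_comp_exp_sub_mul_I
      (fun w => ∫ ρ in a₁..a₂, Real.log ‖(a : ℂ) - ρ * w‖ * ρ) θ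
  · simp only [intervalIntegral.integral_mul_const, intervalIntegral.integral_const_mul,
      integral_cos, Real.sin_two_pi, Real.sin_zero, sub_zero, mul_zero]

/-- **Lemma (triviality of the rotationally symmetric deformation).** For
`0 < a₁ < a₂` and `a > 0`, the function
`θ ↦ ∫₀^{2π} ∫_{a₁}^{a₂} ln|a e^{iθ} - ρ e^{iη}| ρ dρ dη` is constant on `ℝ`
(its value at every `θ` equals its value at `θ = 0`); moreover
`∫₀^{2π} ∫_{a₁}^{a₂} ρ cos η dρ dη = 0`. Consequently the trivial deformation
`(r₁, r₂, x₁¹) = (0,0,0)` solves the contour system for every angular velocity. -/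
theorem trivial_deformation_is_solution
    (a₁ a₂ a : ℝ) (h1 : 0 < a₁) (h12 : a₁ < a₂) (ha : 0 < a) :
    (∀ θ : ℝ,
      (∫ η in (0:ℝ)..(2 * π), ∫ ρ in a₁..a₂,
          Real.log (‖(a : ℂ) * Complex.exp (θ * Complex.I)
            - (ρ : ℂ) * Complex.exp (η * Complex.I)‖) * ρ)
        = ∫ η in (0:ℝ)..(2 * π), ∫ ρ in a₁..a₂,
          Real.log (‖(a : ℂ) * Complex.exp ((0 : ℝ) * Complex.I)
            - (ρ : ℂ) * Complex.exp (η * Complex.I)‖) * ρ) ∧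
    (∫ η in (0:ℝ)..(2 * π), ∫ ρ in a₁..a₂, ρ * Real.cos η) = 0 :=
  trivial_deformation_is_solution_general a₁ a₂ a
end

section
/- Let 0 < a₁ < a₂. Then there exists N ∈ ℕ such that for all n ≥ N both Δ_n > 0 and the sequences (Ω_n^+) and (Ω_n^−) are strictly monotone on n ≥ N; more precisely: if π a₁² > 1 then Ω_{n+1}^+ > Ω_n^+ and Ω_{n+1}^− < Ω_n^− for all n ≥ N, while if π a₁² ≤ 1 then Ω_{n+1}^+ < Ω_n^+ and Ω_{n+1}^− > Ω_n^− for all n ≥ N. -/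
open Real Filter

noncomputable section

/-- Auxiliary: positivity of the numerator of `Δ_n`. -/
lemma auxPos (C r s x : ℝ) (hr1 : r < 1) (hs0 : 0 < s) (hs1 : s ≤ r) (hx0 : 0 < x)
    (h : C ≤ 0 ∨ 2 ≤ C * x) : 0 < (C * x - 1) ^ 2 - s := by
  rcases h with hC | h2
  · have hCx : C * x ≤ 0 := mul_nonpos_of_nonpos_of_nonneg hC hx0.le
    nlinarith [mul_nonneg (neg_nonneg.2 hCx) (show (0:ℝ) ≤ 2 - C * x by linarith)]
  · nlinarith [sq_nonneg (C * x - 2)]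

/-- Auxiliary: increasing case, cleared of denominators. -/
lemma auxInc (C r s x : ℝ) (hr1 : r < 1) (hs0 : 0 < s) (hx1 : 1 ≤ x) (h2 : 2 ≤ C * x) :
    ((C * x - 1) ^ 2 - s) * (x + 1) ^ 2 < ((C * (x + 1) - 1) ^ 2 - r * s) * x ^ 2 := by
  have hxp1 : (0:ℝ) < x + 1 := by linarith
  nlinarith [mul_le_mul_of_nonneg_right h2 hxp1.le,
    mul_le_mul_of_nonneg_right (mul_le_of_le_one_left hs0.le hr1.le) (sq_nonneg x),
    mul_pos hs0 hxp1, mul_pos hs0 (show (0:ℝ) < x by linarith)]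

/-- Auxiliary: decreasing case, cleared of denominators. -/
lemma auxDec (C r s x : ℝ) (hr0 : 0 < r) (hs0 : 0 < s) (hx1 : 1 ≤ x) (hC : C ≤ 0)
    (h1 : s * (x + 1) < 1) :
    ((C * (x + 1) - 1) ^ 2 - r * s) * x ^ 2 < ((C * x - 1) ^ 2 - s) * (x + 1) ^ 2 := by
  have hx0 : (0:ℝ) < x := by linarith
  have hxp1 : (0:ℝ) < x + 1 := by linarith
  nlinarith [mul_lt_mul_of_pos_right h1 hxp1,
    mul_nonneg (mul_nonneg (neg_nonneg.2 hC) hx0.le) hxp1.le,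
    mul_pos (mul_pos hr0 hs0) (mul_pos hx0 hx0)]

/-- **Lemma (strict monotonicity of the bifurcating angular velocities).** For
`0 < a₁ < a₂` there is `N` such that `Δ_n > 0` for all `n ≥ N` and the sequences
`(Ω_n^+)` and `(Ω_n^-)` are strictly monotone on `n ≥ N`, in the direction
determined by the sign of `π a₁² - 1`. -/
theorem monotonicity_of_bifurcation_angular_velocities
    (a₁ a₂ : ℝ) (h1 : 0 < a₁) (h12 : a₁ < a₂) :
    ∃ N : ℕ, (∀ n : ℕ, N ≤ n → 0 < Δn a₁ a₂ n) ∧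
      (1 < π * a₁ ^ 2 → ∀ n : ℕ, N ≤ n →
        Ωplus a₁ a₂ n < Ωplus a₁ a₂ (n + 1) ∧ Ωminus a₁ a₂ (n + 1) < Ωminus a₁ a₂ n) ∧
      (π * a₁ ^ 2 ≤ 1 → ∀ n : ℕ, N ≤ n →
        Ωplus a₁ a₂ (n + 1) < Ωplus a₁ a₂ n ∧ Ωminus a₁ a₂ n < Ωminus a₁ a₂ (n + 1)) := by
  have ha₂ : 0 < a₂ := h1.trans h12
  have hπ : 0 < π := Real.pi_pos
  set C : ℝ := (a₂ ^ 2 - a₁ ^ 2) / (2 * a₂ ^ 2) + 1 / (2 * π * a₂ ^ 2)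
      - 1 / (2 * π * a₁ ^ 2) with hCdef
  set r : ℝ := (a₁ / a₂) ^ 2 with hrdef
  have hq0 : 0 < a₁ / a₂ := by positivity
  have hq1 : a₁ / a₂ < 1 := (div_lt_one ha₂).2 h12
  have hr0 : 0 < r := by rw [hrdef]; positivity
  have hr1 : r < 1 := by rw [hrdef]; nlinarith
  -- key formula for Δn
  have hkey : ∀ n : ℕ, 1 ≤ n →
      Δn a₁ a₂ n = ((C * n - 1) ^ 2 - r ^ n) / (n : ℝ) ^ 2 := by
    intro n hn
    have hn0 : (0:ℝ) < n := by exact_mod_cast hn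
    show ((a₂ ^ 2 - a₁ ^ 2) / (2 * a₂ ^ 2) + 1 / (2 * π * a₂ ^ 2)
        - 1 / (2 * π * a₁ ^ 2) - 1 / (n : ℝ)) ^ 2
      - (1 / (n : ℝ) ^ 2) * (a₁ / a₂) ^ (2 * n) = _
    rw [pow_mul, ← hrdef, ← hCdef]
    field_simp
  -- sign of C
  have hCfac : C = (a₂ ^ 2 - a₁ ^ 2) / (2 * a₂ ^ 2) * (1 - 1 / (π * a₁ ^ 2)) := by
    rw [hCdef]
    field_simp
    ring
  have hfacpos : 0 < (a₂ ^ 2 - a₁ ^ 2) / (2 * a₂ ^ 2) := by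
    apply div_pos (by nlinarith) (by positivity)
  have hCpos : 1 < π * a₁ ^ 2 → 0 < C := by
    intro h
    rw [hCfac]
    apply mul_pos hfacpos
    have : 1 / (π * a₁ ^ 2) < 1 := by
      rw [div_lt_one (by positivity)]; exact h
    linarith
  have hCnonpos : π * a₁ ^ 2 ≤ 1 → C ≤ 0 := by
    intro h
    rw [hCfac]
    apply mul_nonpos_of_nonneg_of_nonpos hfacpos.le
    have h0 : 0 < π * a₁ ^ 2 := by positivity
    have : 1 ≤ 1 / (π * a₁ ^ 2) := (one_le_div h0).2 h
    linarith
  clear_value C r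
  clear hCdef hrdef hCfac hfacpos
  -- the main combinatorial core
  have main : ∃ N : ℕ, ∀ n : ℕ, N ≤ n → 0 < Δn a₁ a₂ n ∧
      (0 < C → Δn a₁ a₂ n < Δn a₁ a₂ (n + 1)) ∧
      (C ≤ 0 → Δn a₁ a₂ (n + 1) < Δn a₁ a₂ n) := by
    have hgeo : Tendsto (fun n : ℕ => ((n : ℝ) + 1) * r ^ n) atTop (nhds 0) := by
      have h1' := tendsto_self_mul_const_pow_of_lt_one hr0.le hr1
      have h2' := tendsto_pow_atTop_nhds_zero_of_lt_one hr0.le hr1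
      have := h1'.add h2'
      simpa [add_mul] using this
    have hev1 : ∀ᶠ n : ℕ in atTop, ((n : ℝ) + 1) * r ^ n < 1 :=
      hgeo.eventually_lt_const one_pos
    have hev2 : ∀ᶠ n : ℕ in atTop, (0 < C → 2 ≤ C * n) := by
      rcases le_or_gt C 0 with hC | hC
      · exact Eventually.of_forall fun n h => absurd h (not_lt.2 hC)
      · filter_upwards [eventually_ge_atTop ⌈2 / C⌉₊] with n hn _
        have h2 : 2 / C ≤ (n : ℝ) :=
          le_trans (Nat.le_ceil _) (by exact_mod_cast hn)
        rw [div_le_iff₀ hC] at h2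
        linarith [h2]
    have hev3 : ∀ᶠ n : ℕ in atTop, 1 ≤ n := eventually_ge_atTop 1
    obtain ⟨N, hN⟩ := eventually_atTop.1 (hev1.and (hev2.and hev3))
    refine ⟨N, fun n hn => ?_⟩
    obtain ⟨hn1, hn2, hn3⟩ := hN n hn
    have hx0 : (0:ℝ) < n := by exact_mod_cast hn3
    have hx1 : (1:ℝ) ≤ n := by exact_mod_cast hn3
    have hs0 : 0 < r ^ n := pow_pos hr0 n
    have hs1 : r ^ n ≤ r := by
      calc r ^ n ≤ r ^ 1 := pow_le_pow_of_le_one hr0.le hr1.le hn3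
      _ = r := pow_one r
    have hkn := hkey n hn3
    have hkn1 := hkey (n + 1) (by omega)
    have hcast : ((n + 1 : ℕ) : ℝ) = (n : ℝ) + 1 := by push_cast; ring
    rw [hcast] at hkn1
    have hpowsucc : r ^ (n + 1) = r * r ^ n := by ring
    rw [hpowsucc] at hkn1
    refine ⟨?_, ?_, ?_⟩
    · -- positivity
      rw [hkn]
      apply div_pos ?_ (by positivity)
      refine auxPos C r (r ^ n) (n : ℝ) hr1 hs0 hs1 hx0 ?_
      rcases le_or_gt C 0 with hC | hC
      · exact Or.inl hC
      · exact Or.inr (hn2 hC)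
    · -- increasing when 0 < C
      intro hC
      rw [hkn, hkn1, div_lt_div_iff₀ (by positivity) (by positivity)]
      exact auxInc C r (r ^ n) (n : ℝ) hr1 hs0 hx1 (hn2 hC)
    · -- decreasing when C ≤ 0
      intro hC
      rw [hkn, hkn1, div_lt_div_iff₀ (by positivity) (by positivity)]
      exact auxDec C r (r ^ n) (n : ℝ) hr0 hs0 hx1 hC (by linarith [hn1] : r ^ n * ((n:ℝ) + 1) < 1)
  obtain ⟨N, hN⟩ := main
  refine ⟨N, fun n hn => (hN n hn).1, ?_, ?_⟩
  · intro hπ1 n hn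
    have hC := hCpos hπ1
    have hpos := (hN n hn).1
    have hmono := (hN n hn).2.1 hC
    have hsq : Real.sqrt (Δn a₁ a₂ n) < Real.sqrt (Δn a₁ a₂ (n + 1)) :=
      Real.sqrt_lt_sqrt hpos.le hmono
    constructor
    · simp only [Ωplus]; linarith
    · simp only [Ωminus]; linarith
  · intro hπ1 n hn
    have hC := hCnonpos hπ1
    have hpos := (hN (n + 1) (by omega)).1
    have hmono := (hN n hn).2.2 hC
    have hsq : Real.sqrt (Δn a₁ a₂ (n + 1)) < Real.sqrt (Δn a₁ a₂ n) :=
      Real.sqrt_lt_sqrt hpos.le hmono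
    constructor
    · simp only [Ωplus]; linarith
    · simp only [Ωminus]; linarith
end
end

section
/- Let 0 < a₁ < a₂. Then there exists N ∈ ℕ such that for all n, n' ≥ N: Δ_n > 0; Ω_n^+ and Ω_n^− do not belong to the set { (a₂²−a₁²)/(2a₂²) + 1/(2π a₂²), 1/(2π a₁²), 0 }; and Ω_n^− ≠ Ω_{n'}^+ (in particular Ω_n^− < (a₂²−a₁²)/(4a₂²) + 1/(4π a₂²) + 1/(4π a₁²) < Ω_n^+ for all n ≥ N). -/
open Real Filter

noncomputable section

set_option maxHeartbeats 1600000 in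
/-- **Lemma (no spectral collisions).** For `0 < a₁ < a₂` there is `N` such that
for all `n, n' ≥ N`: `Δ_n > 0`; neither `Ω_n^+` nor `Ω_n^-` equals any of
`(a₂²-a₁²)/(2a₂²) + 1/(2π a₂²)`, `1/(2π a₁²)`, `0`; and `Ω_n^- ≠ Ω_{n'}^+`
(in particular `Ω_n^- <` midpoint `< Ω_n^+`). -/
theorem no_spectral_collisions
    (a₁ a₂ : ℝ) (h1 : 0 < a₁) (h12 : a₁ < a₂) :
    ∃ N : ℕ, ∀ n : ℕ, N ≤ n →
      0 < Δn a₁ a₂ n ∧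
      Ωplus a₁ a₂ n ∉ ({(a₂ ^ 2 - a₁ ^ 2) / (2 * a₂ ^ 2) + 1 / (2 * π * a₂ ^ 2),
        1 / (2 * π * a₁ ^ 2), 0} : Set ℝ) ∧
      Ωminus a₁ a₂ n ∉ ({(a₂ ^ 2 - a₁ ^ 2) / (2 * a₂ ^ 2) + 1 / (2 * π * a₂ ^ 2),
        1 / (2 * π * a₁ ^ 2), 0} : Set ℝ) ∧
      (∀ n' : ℕ, N ≤ n' → Ωminus a₁ a₂ n ≠ Ωplus a₁ a₂ n') ∧
      Ωminus a₁ a₂ n < Ωmid a₁ a₂ ∧ Ωmid a₁ a₂ < Ωplus a₁ a₂ n := by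

  have hπ := Real.pi_pos
  have ha2 : 0 < a₂ := h1.trans h12
  have hsqlt : a₁ ^ 2 < a₂ ^ 2 := by nlinarith
  obtain ⟨B1, hB1⟩ : ∃ B1 : ℝ, B1 = 1 / (2 * π * a₁ ^ 2) := ⟨_, rfl⟩
  obtain ⟨B2, hB2⟩ : ∃ B2 : ℝ, B2 = (a₂ ^ 2 - a₁ ^ 2) / (2 * a₂ ^ 2) + 1 / (2 * π * a₂ ^ 2) := ⟨_, rfl⟩
  have hB1pos : 0 < B1 := by rw [hB1]; positivity
  have hB2pos : 0 < B2 := by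
    rw [hB2]
    have h : 0 < a₂ ^ 2 - a₁ ^ 2 := by linarith
    positivity
  obtain ⟨C, hC⟩ : ∃ C : ℝ, C = B2 - B1 := ⟨_, rfl⟩
  have hmid : Ωmid a₁ a₂ = (B1 + B2) / 2 := by
    rw [Ωmid, hB1, hB2]
    field_simp
    ring
  have hr0 : 0 < a₁ / a₂ := by positivity
  have hr1 : a₁ / a₂ < 1 := by rw [div_lt_one ha2]; exact h12
  have hmin : 0 < min B1 B2 := lt_min hB1pos hB2pos
  obtain ⟨N, hN⟩ := exists_nat_gt (max (2 / C) (1 / min B1 B2))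
  have hNC : 2 / C < (N : ℝ) := lt_of_le_of_lt (le_max_left _ _) hN
  have hNm : 1 / min B1 B2 < (N : ℝ) := lt_of_le_of_lt (le_max_right _ _) hN
  have key : ∀ n : ℕ, N ≤ n → 0 < Δn a₁ a₂ n ∧ Real.sqrt (Δn a₁ a₂ n) ≠ C ∧
      Real.sqrt (Δn a₁ a₂ n) ≠ -C ∧ Real.sqrt (Δn a₁ a₂ n) < B1 + B2 := by
    intro n hn
    have hnR : (N : ℝ) ≤ (n : ℝ) := Nat.cast_le.mpr hn
    have hnpos : 0 < (n : ℝ) := by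
      have : (0:ℝ) < 1 / min B1 B2 := by positivity
      linarith
    have hn0 : n ≠ 0 := by
      intro h; rw [h] at hnpos; simp at hnpos
    have ha : 1 / (n : ℝ) < min B1 B2 := by
      rw [div_lt_iff₀ hnpos]
      rw [div_lt_iff₀ hmin] at hNm
      nlinarith
    obtain ⟨p, hp⟩ : ∃ p : ℝ, p = (a₁ / a₂) ^ n := ⟨_, rfl⟩
    have hp0 : 0 < p := hp ▸ pow_pos hr0 n
    have hp1 : p < 1 := hp ▸ pow_lt_one₀ hr0.le hr1 hn0
    have hq0 : 0 < 1 / (n : ℝ) * p := by positivity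
    have hq : 1 / (n : ℝ) * p < 1 / (n : ℝ) := by
      nlinarith [one_div_pos.mpr hnpos]
    have hΔeq : Δn a₁ a₂ n = (C - 1 / (n : ℝ)) ^ 2 - (1 / (n : ℝ) * p) ^ 2 := by
      rw [Δn, hp, hC, hB2, hB1, mul_comm 2 n, pow_mul]
      ring
    have h1nC : 0 < C → 1 / (n : ℝ) < C / 2 := by
      intro hCpos
      rw [div_lt_iff₀ hCpos] at hNC
      rw [div_lt_iff₀ hnpos]
      nlinarith [mul_le_mul_of_nonneg_left hnR hCpos.le]
    have hΔpos : 0 < Δn a₁ a₂ n := by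
      rw [hΔeq]
      rcases le_or_gt C 0 with hCle | hCpos
      · have h2 : (1 / (n : ℝ) * p) ^ 2 < (1 / (n : ℝ) - C) ^ 2 :=
          sq_lt_sq' (by linarith) (by linarith)
        nlinarith [h2]
      · have h1n := h1nC hCpos
        have h2 : (1 / (n : ℝ) * p) ^ 2 < (C - 1 / (n : ℝ)) ^ 2 :=
          sq_lt_sq' (by linarith) (by linarith)
        linarith
    have hq2 : (1 / (n : ℝ) * p) ^ 2 < (1 / (n : ℝ)) ^ 2 := by nlinarith
    have hΔne : Δn a₁ a₂ n ≠ C ^ 2 := by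
      rw [hΔeq]
      rcases le_or_gt C 0 with hCle | hCpos
      · have hCn : 0 ≤ -C * (1 / (n : ℝ)) :=
          mul_nonneg (by linarith) (by positivity)
        apply ne_of_gt
        nlinarith
      · have h1n := h1nC hCpos
        have h3 : (1 / (n : ℝ)) * (1 / (n : ℝ)) < (2 * C) * (1 / (n : ℝ)) :=
          mul_lt_mul_of_pos_right (by linarith) (by positivity)
        apply ne_of_lt
        nlinarith
    have hBB : 0 < B1 + B2 := by linarith
    have hΔlt : Δn a₁ a₂ n < (B1 + B2) ^ 2 := by
      rw [hΔeq]
      have h2 : (C - 1 / (n : ℝ)) ^ 2 < (B1 + B2) ^ 2 :=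
        sq_lt_sq' (by rw [hC]; have := min_le_right B1 B2; linarith)
          (by rw [hC]; have := one_div_pos.mpr hnpos; linarith)
      nlinarith [sq_nonneg (1 / (n : ℝ) * p)]
    refine ⟨hΔpos, ?_, ?_, (Real.sqrt_lt' hBB).mpr hΔlt⟩
    · intro h
      exact hΔne (by rw [← Real.sq_sqrt hΔpos.le, h])
    · intro h
      exact hΔne (by rw [← Real.sq_sqrt hΔpos.le, h]; ring)
  refine ⟨N, fun n hn => ?_⟩
  obtain ⟨hΔ, hne1, hne2, hlt⟩ := key n hn
  have hs0 : 0 < Real.sqrt (Δn a₁ a₂ n) := Real.sqrt_pos.mpr hΔ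
  refine ⟨hΔ, ?_, ?_, fun n' hn' => ?_, ?_, ?_⟩
  · simp only [Set.mem_insert_iff, Set.mem_singleton_iff, not_or]
    rw [← hB2, ← hB1, Ωplus, hmid]
    refine ⟨?_, ?_, ?_⟩
    · intro h; exact hne1 (by rw [hC]; linarith)
    · intro h; exact hne2 (by rw [hC]; linarith)
    · intro h; linarith
  · simp only [Set.mem_insert_iff, Set.mem_singleton_iff, not_or]
    rw [← hB2, ← hB1, Ωminus, hmid]
    refine ⟨?_, ?_, ?_⟩
    · intro h; exact hne2 (by rw [hC]; linarith)
    · intro h; exact hne1 (by rw [hC]; linarith)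
    · intro h; linarith
  · have hΔ' := (key n' hn').1
    have hs0' : 0 < Real.sqrt (Δn a₁ a₂ n') := Real.sqrt_pos.mpr hΔ'
    exact ne_of_lt (by rw [Ωminus, Ωplus]; linarith)
  · rw [Ωminus]; linarith
  · rw [Ωplus]; linarith
end
end

section
/- Let 0 < a₁ < a₂, let n ≥ 1 be an integer with Δ_n > 0, and let Ω ∈ {Ω_n^+, Ω_n^−}. Then the following transversality quantities are nonzero: (i) Ω − 1/(2n) − 1/(2π a₁²) ≠ 0; (ii) 2Ω − (a₂²−a₁²)/(2a₂²) − 1/(2π a₁²) − 1/(2π a₂²) ≠ 0; and consequently (iii) (Ω − 1/(2n) − 1/(2π a₁²))² − (1/(4n²))(a₁/a₂)^{2n} ≠ 0. -/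
open Real Filter

noncomputable section

/-- **Lemma (transversality quantities are nonzero).** For `0 < a₁ < a₂`, `n ≥ 1`
with `Δ_n > 0` and `Ω ∈ {Ω_n^+, Ω_n^-}`:
(i) `Ω - 1/(2n) - 1/(2π a₁²) ≠ 0`;
(ii) `2Ω - (a₂²-a₁²)/(2a₂²) - 1/(2π a₁²) - 1/(2π a₂²) ≠ 0`;
(iii) `(Ω - 1/(2n) - 1/(2π a₁²))² - (1/(4n²))(a₁/a₂)^{2n} ≠ 0`. -/
theorem transversality_quantities_nonzero
    (a₁ a₂ : ℝ) (h1 : 0 < a₁) (h12 : a₁ < a₂) (n : ℕ) (hn : 1 ≤ n)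
    (hΔ : 0 < Δn a₁ a₂ n) (Ω : ℝ)
    (hΩ : Ω = Ωplus a₁ a₂ n ∨ Ω = Ωminus a₁ a₂ n) :
    Ω - 1 / (2 * (n : ℝ)) - 1 / (2 * π * a₁ ^ 2) ≠ 0 ∧
    2 * Ω - (a₂ ^ 2 - a₁ ^ 2) / (2 * a₂ ^ 2) - 1 / (2 * π * a₁ ^ 2)
      - 1 / (2 * π * a₂ ^ 2) ≠ 0 ∧
    (Ω - 1 / (2 * (n : ℝ)) - 1 / (2 * π * a₁ ^ 2)) ^ 2
      - (1 / (4 * (n : ℝ) ^ 2)) * (a₁ / a₂) ^ (2 * n) ≠ 0 := by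
  set s := Real.sqrt (Δn a₁ a₂ n) with hsdef
  have hs0 : 0 < s := Real.sqrt_pos.mpr hΔ
  have hs2 : s ^ 2 = Δn a₁ a₂ n := Real.sq_sqrt hΔ.le
  set B : ℝ := (a₂ ^ 2 - a₁ ^ 2) / (2 * a₂ ^ 2) + 1 / (2 * π * a₂ ^ 2)
      - 1 / (2 * π * a₁ ^ 2) - 1 / (n : ℝ) with hB
  set r : ℝ := (a₁ / a₂) ^ (2 * n) with hrdef
  have hr : 0 < r := pow_pos (div_pos h1 (h1.trans h12)) _
  have hΔeq : Δn a₁ a₂ n = B ^ 2 - (1 / (n : ℝ) ^ 2) * r := by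
    rw [hB, hrdef]; rfl
  obtain ⟨ε, hε, hΩ'⟩ : ∃ ε : ℝ, (ε = 1 ∨ ε = -1) ∧ Ω = Ωmid a₁ a₂ + ε * (1/2) * s := by
    rcases hΩ with h | h
    · exact ⟨1, Or.inl rfl, by rw [h, Ωplus]; ring⟩
    · exact ⟨-1, Or.inr rfl, by rw [h, Ωminus]; ring⟩
  have heq1 : Ω - 1 / (2 * (n : ℝ)) - 1 / (2 * π * a₁ ^ 2) = (B + ε * s) / 2 := by
    rw [hΩ', Ωmid, hB]; ring
  have heq2 : 2 * Ω - (a₂ ^ 2 - a₁ ^ 2) / (2 * a₂ ^ 2) - 1 / (2 * π * a₁ ^ 2)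
      - 1 / (2 * π * a₂ ^ 2) = ε * s := by
    rw [hΩ', Ωmid]; ring
  clear_value s B r
  clear hΩ hΩ' hsdef hB hrdef
  have hs2' : s ^ 2 = B ^ 2 - (1 / (n : ℝ) ^ 2) * r := by rw [hs2, hΔeq]
  have hnr : 0 < (1 / (n : ℝ) ^ 2) * r := by
    have hn' : (0:ℝ) < (n:ℝ) := by exact_mod_cast hn
    positivity
  have hsB : s ^ 2 < B ^ 2 := by linarith
  have hε2 : ε ^ 2 = 1 := by rcases hε with h|h <;> rw [h] <;> norm_num
  have hBε : B + ε * s ≠ 0 := by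
    intro h
    have hBs : B = -(ε * s) := by linarith
    have : B ^ 2 = s ^ 2 := by rw [hBs]; linear_combination s ^ 2 * hε2
    linarith
  refine ⟨?_, ?_, ?_⟩
  · rw [heq1]
    intro h
    exact hBε (by linarith)
  · rw [heq2]
    rcases hε with h|h <;> rw [h] <;> intro hc <;> linarith
  · rw [heq1]
    have key : (1 / (4 * (n : ℝ) ^ 2)) * r = (B ^ 2 - s ^ 2) / 4 := by
      have h4 : (1 / (4 * (n : ℝ) ^ 2)) * r = (1/4) * ((1 / (n : ℝ) ^ 2) * r) := by ring
      rw [h4]; linarith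
    rw [key]
    have hfac : ((B + ε * s) / 2) ^ 2 - (B ^ 2 - s ^ 2) / 4 = s * (ε * B + s) / 2 := by
      linear_combination (s ^ 2 / 4) * hε2
    rw [hfac]
    intro h
    have h2 : ε * B + s = 0 := by
      rcases mul_eq_zero.mp (by linarith : s * (ε * B + s) = 0) with h'|h'
      · exact absurd h' hs0.ne'
      · exact h'
    have : B ^ 2 = s ^ 2 := by linear_combination (ε * B - s) * h2 - B ^ 2 * hε2
    linarith
end
end
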